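/- Coupling, part (a): let β > 0 and let γ be a loop supported in B_N with 𝒞_γ nonempty. If n is distributed according to the random current model 𝐏^γ_{B_N,β}, then the pointwise reduction n mod 2 is distributed according to the high-temperature model P^γ_{B_N,β}; that is, for every ω ∈ 𝒫_γ^{ht}, 𝐏^γ_{B_N,β}({n : n ≡ ω mod 2}) = P^γ_{B_N,β}(ω). -/

import Mathlib

open scoped Classical

namespace LGT

/-- A site (vertex) of the lattice `ℤ^m`. -/
abbrev Site (m : ℕ) := Fin m → ℤ

/-- The `i`-th unit vector. -/
def unitVec (m : ℕ) (i : Fin m) : Site m := fun j => if j = i then 1 else 0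

/-- An oriented nearest-neighbour edge of `ℤ^m`: it joins `base` and `base + e_dir`,
oriented from `base` to `base + e_dir` when `ori = true`, and oppositely otherwise. -/
structure OEdge (m : ℕ) where
  base : Site m
  dir : Fin m
  ori : Bool
deriving DecidableEq

/-- An oriented plaquette of `ℤ^m` (valid when `dir1 < dir2`): the unit square with
corners `base, base + e_dir1, base + e_dir2, base + e_dir1 + e_dir2`, positively
oriented when `ori = true`. -/
structure OPlaq (m : ℕ) where
  base : Site m
  dir1 : Fin m
  dir2 : Fin m
  ori : Bool
deriving DecidableEq

/-- The same edge with reversed orientation. -/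
def OEdge.neg {m : ℕ} (e : OEdge m) : OEdge m := ⟨e.base, e.dir, !e.ori⟩

/-- The same plaquette with reversed orientation. -/
def OPlaq.neg {m : ℕ} (p : OPlaq m) : OPlaq m := ⟨p.base, p.dir1, p.dir2, !p.ori⟩

/-- The source vertex of an oriented edge. -/
def OEdge.src {m : ℕ} (e : OEdge m) : Site m :=
  if e.ori then e.base else e.base + unitVec m e.dir

/-- The target vertex of an oriented edge. -/
def OEdge.tgt {m : ℕ} (e : OEdge m) : Site m :=
  if e.ori then e.base + unitVec m e.dir else e.base

/-- `x ∈ B_N = [-N,N]^m ∩ ℤ^m`. -/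
def inBox (m N : ℕ) (x : Site m) : Prop := ∀ i, |x i| ≤ (N : ℤ)

/-- `C_1(B_N)`: oriented edges with both endpoints in `B_N`. -/
def C1 (m N : ℕ) : Set (OEdge m) :=
  {e | inBox m N e.base ∧ inBox m N (e.base + unitVec m e.dir)}

/-- The four corners of a plaquette. -/
def OPlaq.corners {m : ℕ} (p : OPlaq m) : List (Site m) :=
  [p.base, p.base + unitVec m p.dir1, p.base + unitVec m p.dir2,
    p.base + unitVec m p.dir1 + unitVec m p.dir2]

/-- The four oriented boundary edges of an oriented plaquette. -/
def OPlaq.bdry {m : ℕ} (p : OPlaq m) : List (OEdge m) :=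
  let l : List (OEdge m) :=
    [⟨p.base, p.dir1, true⟩, ⟨p.base + unitVec m p.dir1, p.dir2, true⟩,
     ⟨p.base + unitVec m p.dir2, p.dir1, false⟩, ⟨p.base, p.dir2, false⟩]
  if p.ori then l else l.map OEdge.neg

/-- `C_2(B_N)`: oriented plaquettes with all corners in `B_N`. -/
def C2 (m N : ℕ) : Set (OPlaq m) :=
  {p | p.dir1 < p.dir2 ∧ ∀ x ∈ p.corners, inBox m N x}

/-- `C_2(B_N)^+`: positively oriented plaquettes of `C_2(B_N)`. -/
def C2plus (m N : ℕ) : Set (OPlaq m) := {p | p ∈ C2 m N ∧ p.ori = true}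

/-- `supp ∂̂e`: the plaquettes of `C_2(B_N)` whose oriented boundary contains `e`. -/
def cob (m N : ℕ) (e : OEdge m) : Set (OPlaq m) := {p | p ∈ C2 m N ∧ e ∈ p.bdry}

/-- A loop: a finitely supported `ℤ`-valued function on oriented edges with values in
`{-1,0,1}`, odd under orientation reversal, whose boundary vanishes as a `0`-chain. -/
structure IsLoop (m : ℕ) (γ : OEdge m → ℤ) : Prop where
  finite_supp : (Function.support γ).Finite
  vals : ∀ e, γ e = -1 ∨ γ e = 0 ∨ γ e = 1
  antisym : ∀ e, γ (OEdge.neg e) = - γ e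
  bdry_zero : ∀ v : Site m,
    (∑ᶠ e : OEdge m, γ e *
      ((if OEdge.tgt e = v then 1 else 0) - (if OEdge.src e = v then (1 : ℤ) else 0))) = 0

/-- A loop supported in `B_N`. -/
def LoopIn (m N : ℕ) (γ : OEdge m → ℤ) : Prop :=
  IsLoop m γ ∧ ∀ e, γ e ≠ 0 → e ∈ C1 m N

/-- `Ω^1(B_N, ℤ₂)`: `ℤ₂`-valued one-forms on `C_1(B_N)`. -/
def Omega1 (m N : ℕ) : Set (OEdge m → ZMod 2) :=
  {σ | (∀ e, e ∉ C1 m N → σ e = 0) ∧ ∀ e, σ (OEdge.neg e) = - σ e}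

/-- The natural representation `ρ(g) = e^{iπ g} ∈ {±1}` of `ℤ₂`. -/
noncomputable def rho (g : ZMod 2) : ℝ := if g = 0 then 1 else -1

/-- The exterior derivative `dσ(p) = Σ_{e ∈ ∂p} σ(e)`. -/
def dOne {m : ℕ} (σ : OEdge m → ZMod 2) (p : OPlaq m) : ZMod 2 := (p.bdry.map σ).sum

/-- The Wilson action `S(σ) = -Σ_{p ∈ C_2(B_N)} ρ(dσ(p))`. -/
noncomputable def action (m N : ℕ) (σ : OEdge m → ZMod 2) : ℝ :=
  - ∑ᶠ p ∈ C2 m N, rho (dOne σ p)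

/-- The Wilson loop variable `W_γ(σ) = Π_{e ∈ (supp γ)^+} ρ(σ(e))`. -/
noncomputable def wilson (m : ℕ) (γ : OEdge m → ℤ) (σ : OEdge m → ZMod 2) : ℝ :=
  ∏ᶠ e ∈ {e : OEdge m | γ e ≠ 0 ∧ e.ori = true}, rho (σ e)

/-- `Z_{β,N}[γ] = Σ_{σ ∈ Ω^1(B_N,ℤ₂)} W_γ(σ) e^{-β S(σ)}`. -/
noncomputable def Z (m N : ℕ) (β : ℝ) (γ : OEdge m → ℤ) : ℝ :=
  ∑ᶠ σ ∈ Omega1 m N, wilson m γ σ * Real.exp (- β * action m N σ)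

/-- The finite-volume Gibbs expectation `E_{N,β}[f]`. -/
noncomputable def Eexp (m N : ℕ) (β : ℝ) (f : (OEdge m → ZMod 2) → ℝ) : ℝ :=
  (∑ᶠ σ ∈ Omega1 m N, f σ * Real.exp (- β * action m N σ)) /
    (∑ᶠ σ ∈ Omega1 m N, Real.exp (- β * action m N σ))

/-- `E_{N,β}[W_γ]`. -/
noncomputable def Ewilson (m N : ℕ) (β : ℝ) (γ : OEdge m → ℤ) : ℝ :=
  Eexp m N β (wilson m γ)

/-- A current: an integer-valued `2`-form on `C_2(B_N)` that is nonnegative on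
positively oriented plaquettes. -/
def IsCurrent (m N : ℕ) (n : OPlaq m → ℤ) : Prop :=
  (∀ p, p ∉ C2 m N → n p = 0) ∧ (∀ p, n (OPlaq.neg p) = - n p) ∧
    (∀ p ∈ C2plus m N, 0 ≤ n p)

/-- `𝒞_γ`: the currents with source `γ`. -/
def CurSet (m N : ℕ) (γ : OEdge m → ℤ) : Set (OPlaq m → ℤ) :=
  {n | IsCurrent m N n ∧ ∀ e ∈ C1 m N,
      ((γ e : ZMod 2) + ∑ᶠ p ∈ cob m N e, ((n p : ZMod 2))) = 0}

/-- The weight `w_β(n) = Π_{p ∈ C_2(B_N)^+} (2β)^{n(p)}/n(p)!` of a current. -/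
noncomputable def wgt (m N : ℕ) (β : ℝ) (n : OPlaq m → ℤ) : ℝ :=
  ∏ᶠ p ∈ C2plus m N, (2 * β) ^ (n p).toNat / (Nat.factorial (n p).toNat)

/-- `q ≤ n` on positively oriented plaquettes. -/
def leOn (m N : ℕ) (q n : OPlaq m → ℤ) : Prop := ∀ p ∈ C2plus m N, q p ≤ n p

/-- `𝒫_γ^{ht}`: `ℤ₂`-valued `2`-forms on `C_2(B_N)` with `δω = γ (mod 2)`. -/
def HTset (m N : ℕ) (γ : OEdge m → ℤ) : Set (OPlaq m → ZMod 2) :=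
  {ω | (∀ p, p ∉ C2 m N → ω p = 0) ∧ (∀ p, ω (OPlaq.neg p) = - ω p) ∧
    ∀ e ∈ C1 m N, (∑ᶠ p ∈ cob m N e, ω p) = (γ e : ZMod 2)}

/-- `(supp ω)^+`. -/
def suppPlus (m N : ℕ) (ω : OPlaq m → ZMod 2) : Set (OPlaq m) :=
  {p | p ∈ C2plus m N ∧ ω p ≠ 0}

/-- The high-temperature weight `(tanh 2β)^{|(supp ω)^+|}`. -/
noncomputable def htWeight (m N : ℕ) (β : ℝ) (ω : OPlaq m → ZMod 2) : ℝ :=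
  Real.tanh (2 * β) ^ (Nat.card ↥(suppPlus m N ω))

/-- The high-temperature model `P^γ_{B_N,β}`: probability mass of `ω ∈ 𝒫_γ^{ht}`. -/
noncomputable def htProb (m N : ℕ) (β : ℝ) (γ : OEdge m → ℤ) (ω : OPlaq m → ZMod 2) : ℝ :=
  htWeight m N β ω / ∑ᶠ ω' ∈ HTset m N γ, htWeight m N β ω'

/-- The random current model `𝐏^γ_{B_N,β}`: probability of an event `A ⊆ 𝒞_γ`. -/
noncomputable def rcProb (m N : ℕ) (β : ℝ) (γ : OEdge m → ℤ) (A : Set (OPlaq m → ℤ)) : ℝ :=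
  (∑' n : ↥(CurSet m N γ ∩ A), wgt m N β n) / (∑' n : ↥(CurSet m N γ), wgt m N β n)

/-- The trace `n̂` of a current: the set of positively oriented plaquettes where `n > 0`. -/
def hatCur (m N : ℕ) (n : OPlaq m → ℤ) : Set (OPlaq m) :=
  {p | p ∈ C2plus m N ∧ 0 < n p}

/-- The probability that iid Bernoulli plaquette percolation `Ψ_q` on `C_2(B_N)^+`
produces exactly the configuration (subset) `A`. -/
noncomputable def bernoulli (m N : ℕ) (q : ℝ) (A : Set (OPlaq m)) : ℝ :=
  ∏ᶠ p ∈ C2plus m N, (if p ∈ A then q else 1 - q)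

/-- `∂P ≡ γ (mod 2)`: for every edge `e ∈ C_1(B_N)` the number of plaquettes of `P`
whose boundary contains `e` or `-e` is congruent to `γ(e)` mod `2`. -/
def BdryCong (m N : ℕ) (P : Set (OPlaq m)) (γ : OEdge m → ℤ) : Prop :=
  ∀ e ∈ C1 m N,
    ((Nat.card ↥{p ∈ P | e ∈ p.bdry ∨ OEdge.neg e ∈ p.bdry} : ZMod 2)) = (γ e : ZMod 2)

/-- `𝒫_γ`: subsets of `C_2(B_N)^+` containing a subset with boundary `γ (mod 2)`. -/
def PlaqSet (m N : ℕ) (γ : OEdge m → ℤ) : Set (Set (OPlaq m)) :=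
  {P | P ⊆ C2plus m N ∧ ∃ P', P' ⊆ P ∧ BdryCong m N P' γ}

/-- `N₀(P)`: the number of `σ ∈ Ω^1(B_N,ℤ₂)` with `dσ(p) = 0` for all `p ∈ P`. -/
noncomputable def N0 (m N : ℕ) (P : Set (OPlaq m)) : ℕ :=
  Nat.card ↥{σ ∈ Omega1 m N | ∀ p ∈ P, dOne σ p = 0}

/-- The random cluster weight `N₀(P) q^{|P|} (1-q)^{|C_2(B_N)^+ ∖ P|}`. -/
noncomputable def rcmWeight (m N : ℕ) (q : ℝ) (P : Set (OPlaq m)) : ℝ :=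
  (N0 m N P : ℝ) * q ^ (Nat.card ↥P) * (1 - q) ^ (Nat.card ↥(C2plus m N \ P))

/-- The random cluster model `φ^γ_{B_N,q}`: probability mass of `P` (zero off `𝒫_γ`). -/
noncomputable def rcmProb (m N : ℕ) (q : ℝ) (γ : OEdge m → ℤ) (P : Set (OPlaq m)) : ℝ :=
  (if P ∈ PlaqSet m N γ then rcmWeight m N q P else 0) /
    ∑ᶠ P' ∈ PlaqSet m N γ, rcmWeight m N q P'

/-- `S_γ(P)`: the subsets of `P` with boundary `γ (mod 2)`. -/
def Sset (m N : ℕ) (γ : OEdge m → ℤ) (P : Set (OPlaq m)) : Set (Set (OPlaq m)) :=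
  {P' | P' ⊆ P ∧ BdryCong m N P' γ}

/-- The `ℤ₂`-valued `2`-form whose support among positively oriented plaquettes is `P'`. -/
noncomputable def formOf {m : ℕ} (P' : Set (OPlaq m)) : OPlaq m → ZMod 2 :=
  fun p => if p ∈ P' ∨ OPlaq.neg p ∈ P' then 1 else 0

/-- The vertices of the support of a loop. -/
def vertsOf (m : ℕ) (γ : OEdge m → ℤ) : Set (Site m) :=
  {x | ∃ e, γ e ≠ 0 ∧ (x = OEdge.src e ∨ x = OEdge.tgt e)}

/-- The graph (`ℓ¹`) distance between two sites of `ℤ^m`. -/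
def distL1 (m : ℕ) (x y : Site m) : ℕ := ∑ i, (x i - y i).natAbs

/-- The minimal graph distance between the supports of two loops. -/
noncomputable def suppDist (m : ℕ) (γ γ' : OEdge m → ℤ) : ℕ :=
  sInf {d | ∃ x ∈ vertsOf m γ, ∃ y ∈ vertsOf m γ', d = distL1 m x y}

/-- `area(γ) = min_{n ∈ 𝒞_γ} Σ_{p ∈ C_2(B_N)^+} n(p)`. -/
noncomputable def areaOf (m N : ℕ) (γ : OEdge m → ℤ) : ℕ :=
  sInf {k : ℕ | ∃ n ∈ CurSet m N γ, (∑ᶠ p ∈ C2plus m N, n p) = (k : ℤ)}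

/-- Translation of a loop by a lattice vector. -/
def translate (m : ℕ) (v : Site m) (γ : OEdge m → ℤ) : OEdge m → ℤ :=
  fun e => γ ⟨e.base - v, e.dir, e.ori⟩

/-- The site `a·e₀ + b·e₁` in the fixed coordinate plane spanned by the first two
coordinate directions. -/
def planeSite (m : ℕ) (h : 1 < m) (a b : ℤ) : Site m :=
  fun j => if j = (⟨0, by omega⟩ : Fin m) then a else if j = (⟨1, h⟩ : Fin m) then b else 0

/-- The axis-parallel rectangular loop `γ_{R,T}` with corners `0, R·e₀, R·e₀+T·e₁, T·e₁`
in the fixed coordinate plane spanned by the first two coordinate directions. -/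
noncomputable def rectLoop (m : ℕ) (h : 1 < m) (R T : ℕ) : OEdge m → ℤ := fun e =>
  (∑ k ∈ Finset.range R,
    ((if e = ⟨planeSite m h k 0, ⟨0, by omega⟩, true⟩ then (1 : ℤ) else 0)
      - (if e = OEdge.neg ⟨planeSite m h k 0, ⟨0, by omega⟩, true⟩ then 1 else 0)
      - (if e = ⟨planeSite m h k T, ⟨0, by omega⟩, true⟩ then 1 else 0)
      + (if e = OEdge.neg ⟨planeSite m h k T, ⟨0, by omega⟩, true⟩ then 1 else 0)))
  + (∑ k ∈ Finset.range T,
    ((if e = ⟨planeSite m h R k, ⟨1, h⟩, true⟩ then (1 : ℤ) else 0)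
      - (if e = OEdge.neg ⟨planeSite m h R k, ⟨1, h⟩, true⟩ then 1 else 0)
      - (if e = ⟨planeSite m h 0 k, ⟨1, h⟩, true⟩ then 1 else 0)
      + (if e = OEdge.neg ⟨planeSite m h 0 k, ⟨1, h⟩, true⟩ then 1 else 0)))

end LGT

/-!
Since the source constraint defining `𝒞_γ` only sees `n mod 2`, a current with parity `ω` is
the same as a choice of natural numbers `n(p) ≡ ω(p) (mod 2)` on the positive plaquettes, and
its weight factorizes over plaquettes. Summing each factor over its parity class of `ℕ` gives
`cosh 2β` or `sinh 2β`, so the class of `ω` has total weight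
`cosh(2β)^{|C_2(B_N)^+|} · tanh(2β)^{|(supp ω)^+|}`. These classes partition `𝒞_γ` and are
indexed by `𝒫^{ht}_γ`, so the factor `cosh(2β)^{|C_2(B_N)^+|}` cancels in the ratio.
-/

open Real

theorem hasSum_pi_finprod {ι κ : Type*} [Finite ι] {f : ι → κ → ℝ} {a : ι → ℝ}
    (hf : ∀ i, HasSum (f i) (a i)) (hf₀ : ∀ i k, 0 ≤ f i k) :
    HasSum (fun x : ι → κ => ∏ᶠ i, f i (x i)) (∏ᶠ i, a i) := by
  refine Finite.induction_empty_option (P := fun ι => ∀ (f : ι → κ → ℝ) (a : ι → ℝ),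
    (∀ i, HasSum (f i) (a i)) → (∀ i k, 0 ≤ f i k) →
    HasSum (fun x : ι → κ => ∏ᶠ i, f i (x i)) (∏ᶠ i, a i)) ?_ ?_ ?_ ι f a hf hf₀
  · intro α β e ih f a hf hf₀
    refine ((Equiv.arrowCongr e (Equiv.refl κ)).hasSum_iff
      (f := fun x => ∏ᶠ i, f i (x i))).mp ?_
    convert ih (fun i => f (e i)) (fun i => a (e i)) (fun i => hf (e i)) (fun i => hf₀ (e i))
      using 1
    · ext x
      rw [Function.comp_apply, ← finprod_comp_equiv e]
      simp [Equiv.arrowCongr]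
    · exact (finprod_comp_equiv e).symm
  · intro f a _ _
    simp [finprod_of_isEmpty]
  · intro α _ ih f a hf hf₀
    have hrest := ih _ _ (fun i => hf (some i)) (fun i => hf₀ (some i))
    have hpair := (hf none).mul hrest ((hf none).summable.mul_of_nonneg hrest.summable
      (hf₀ none) fun _ => finprod_nonneg fun i => hf₀ (some i) _)
    refine ((Equiv.piOptionEquivProd (β := fun _ => κ)).symm.hasSum_iff
      (f := fun x => ∏ᶠ i, f i (x i))).mp ?_
    simp only [finprod_eq_prod_of_fintype, Fintype.prod_option] at hpair ⊢
    exact hpair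

theorem hasSum_pow_div_factorial_parity (x : ℝ) (a : ZMod 2) :
    HasSum (fun k : ℕ => if (k : ZMod 2) = a then x ^ k / k.factorial else 0)
      (if a = 0 then cosh x else sinh x) := by
  obtain rfl | rfl : a = 0 ∨ a = 1 := by decide +revert
  · rw [← (mul_right_injective₀ two_ne_zero).hasSum_iff]
    · simpa [Function.comp_def, ZMod.natCast_eq_zero_iff_even] using hasSum_cosh x
    · intro k hk
      have : ¬ Even k := fun ⟨j, hj⟩ => hk ⟨j, by simp [hj, two_mul]⟩
      simp [ZMod.natCast_eq_zero_iff_even, this]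
  · have hinj : Function.Injective (fun j : ℕ => 2 * j + 1) := fun j k h => by simp_all
    rw [← hinj.hasSum_iff]
    · simpa [Function.comp_def, ZMod.natCast_eq_one_iff_odd] using hasSum_sinh x
    · intro k hk
      have : ¬ Odd k := fun ⟨j, hj⟩ => hk ⟨j, hj.symm⟩
      simp [ZMod.natCast_eq_one_iff_odd, this]

namespace LGT

section Coupling

variable {m N : ℕ}

lemma OPlaq.neg_neg (p : OPlaq m) : p.neg.neg = p := by
  cases p; simp [OPlaq.neg]

lemma OPlaq.neg_mem_C2plus {p : OPlaq m} (hp : p ∈ C2 m N) (ho : p.ori = false) :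
    p.neg ∈ C2plus m N :=
  ⟨hp, by simp [OPlaq.neg, ho]⟩

lemma C2_finite (m N : ℕ) : (C2 m N).Finite := by
  have h : C2 m N ⊆ (fun t : (Fin m → Set.Icc (-(N : ℤ)) N) × Fin m × Fin m × Bool =>
      (⟨fun i => t.1 i, t.2.1, t.2.2.1, t.2.2.2⟩ : OPlaq m)) '' Set.univ := by
    intro p hp
    have hb : inBox m N p.base := hp.2 p.base (by simp [OPlaq.corners])
    exact ⟨⟨fun i => ⟨p.base i, abs_le.mp (hb i)⟩, p.dir1, p.dir2, p.ori⟩, trivial, rfl⟩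
  exact (Set.finite_univ.image _).subset h

instance : Finite (C2plus m N) :=
  ((C2_finite m N).subset fun _ hp => hp.1).to_subtype

def IsTwoForm {α : Type*} [Zero α] [Neg α] (m N : ℕ) (f : OPlaq m → α) : Prop :=
  (∀ p, p ∉ C2 m N → f p = 0) ∧ ∀ p, f (OPlaq.neg p) = -f p

namespace IsTwoForm

variable {α β : Type*} [AddGroup α] [AddGroup β]

theorem ext {f g : OPlaq m → α} (hf : IsTwoForm m N f) (hg : IsTwoForm m N g)
    (h : ∀ p ∈ C2plus m N, f p = g p) : f = g := by
  funext p
  by_cases hp : p ∈ C2 m N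
  · cases ho : p.ori with
    | true => exact h p ⟨hp, ho⟩
    | false =>
      rw [← neg_neg (f p), ← hf.2, h _ (OPlaq.neg_mem_C2plus hp ho), hg.2, neg_neg]
  · rw [hf.1 p hp, hg.1 p hp]

theorem comp {f : OPlaq m → α} (hf : IsTwoForm m N f) (φ : α →+ β) :
    IsTwoForm m N (φ ∘ f) :=
  ⟨fun p hp => by simp [hf.1 p hp], fun p => by simp [hf.2 p]⟩

end IsTwoForm

noncomputable def oddExtension {α : Type*} [Zero α] [Neg α] (y : C2plus m N → α) :
    OPlaq m → α := fun p =>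
  if h : p ∈ C2plus m N then y ⟨p, h⟩ else if h' : p.neg ∈ C2plus m N then -y ⟨p.neg, h'⟩ else 0

lemma oddExtension_of_mem {α : Type*} [Zero α] [Neg α] (y : C2plus m N → α) {p : OPlaq m}
    (hp : p ∈ C2plus m N) : oddExtension y p = y ⟨p, hp⟩ :=
  dif_pos hp

lemma isTwoForm_oddExtension {α : Type*} [AddGroup α] (y : C2plus m N → α) :
    IsTwoForm m N (oddExtension y) := by
  refine ⟨fun p hp => ?_, fun p => ?_⟩
  · have h : p ∉ C2plus m N := fun h => hp h.1
    have h' : p.neg ∉ C2plus m N := fun h' => hp h'.1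
    simp only [oddExtension, dif_neg h, dif_neg h']
  · by_cases h : p ∈ C2plus m N
    · have h' : p.neg ∉ C2plus m N := fun h' => by simpa [OPlaq.neg, h.2] using h'.2
      simp only [oddExtension, dif_neg h', dif_pos h, OPlaq.neg_neg]
    · by_cases h' : p.neg ∈ C2plus m N
      · simp only [oddExtension, dif_pos h', dif_neg h, neg_neg]
      · have h'' : p.neg.neg ∉ C2plus m N := by rwa [OPlaq.neg_neg]
        simp only [oddExtension, dif_neg h, dif_neg h', dif_neg h'', neg_zero]

lemma isTwoForm_of_mem_HTset {γ : OEdge m → ℤ} {ω : OPlaq m → ZMod 2} (hω : ω ∈ HTset m N γ) :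
    IsTwoForm m N ω :=
  ⟨hω.1, hω.2.1⟩

lemma HTset_finite (γ : OEdge m → ℤ) : (HTset m N γ).Finite :=
  Set.Finite.of_finite_image (f := fun ω (p : C2plus m N) => ω p) (Set.toFinite _)
    fun _ hω _ hω' h => (isTwoForm_of_mem_HTset hω).ext (isTwoForm_of_mem_HTset hω')
      fun p hp => congrFun h ⟨p, hp⟩

lemma IsCurrent.isTwoForm {n : OPlaq m → ℤ} (h : IsCurrent m N n) : IsTwoForm m N n :=
  ⟨h.1, h.2.1⟩

lemma IsCurrent.toNat_eq {n : OPlaq m → ℤ} (h : IsCurrent m N n) {p : OPlaq m}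
    (hp : p ∈ C2plus m N) : ((n p).toNat : ℤ) = n p :=
  Int.toNat_of_nonneg (h.2.2 p hp)

lemma mem_CurSet_iff {γ : OEdge m → ℤ} {n : OPlaq m → ℤ} :
    n ∈ CurSet m N γ ↔ IsCurrent m N n ∧ (fun p => (n p : ZMod 2)) ∈ HTset m N γ := by
  have hform : IsCurrent m N n → IsTwoForm m N (fun p => (n p : ZMod 2)) := fun h =>
    h.isTwoForm.comp (Int.castAddHom (ZMod 2))
  simp only [CurSet, HTset, Set.mem_ofPred_eq, CharTwo.add_eq_zero, eq_comm (a := (γ _ : ZMod 2))]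
  exact ⟨fun h => ⟨h.1, (hform h.1).1, (hform h.1).2, h.2⟩, fun h => ⟨h.1, h.2.2.2⟩⟩

lemma wgt_eq_finprod (β : ℝ) (n : OPlaq m → ℤ) :
    wgt m N β n = ∏ᶠ p : C2plus m N, (2 * β) ^ (n p).toNat / ((n p).toNat.factorial : ℝ) :=
  (finprod_set_coe_eq_finprod_mem _).symm

lemma finprod_ite_cosh_sinh (x : ℝ) (ω : OPlaq m → ZMod 2) :
    ∏ᶠ p : C2plus m N, (if ω p = 0 then cosh x else sinh x)
      = cosh x ^ Nat.card (C2plus m N) * tanh x ^ Nat.card (suppPlus m N ω) := by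
  have := Fintype.ofFinite (C2plus m N)
  have hfactor : ∀ p : C2plus m N, (if ω p = 0 then cosh x else sinh x)
      = cosh x * tanh x ^ (if ω p = 0 then 0 else 1) := fun p => by
    split_ifs
    · simp
    · rw [pow_one, tanh_eq_sinh_div_cosh, mul_div_cancel₀ _ (cosh_pos x).ne']
  have hcard : Nat.card (suppPlus m N ω) = ∑ p : C2plus m N, if ω p = 0 then 0 else 1 := by
    simp_rw [← ite_not (ω _ = 0), ← Finset.card_filter, ← Fintype.card_subtype,
      ← Nat.card_eq_fintype_card]
    exact Nat.card_congr (Equiv.subtypeSubtypeEquivSubtypeInter _ (fun p => ω p ≠ 0)).symm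
  rw [finprod_eq_prod_of_fintype, Finset.prod_congr rfl fun p _ => hfactor p,
    Finset.prod_mul_distrib, Finset.prod_const, Finset.prod_pow_eq_pow_sum, Finset.card_univ,
    Nat.card_eq_fintype_card, hcard]

abbrev parityClass (m N : ℕ) (γ : OEdge m → ℤ) (ω : OPlaq m → ZMod 2) : Set (OPlaq m → ℤ) :=
  CurSet m N γ ∩ {n | ∀ p, (n p : ZMod 2) = ω p}

lemma exists_mem_parityClass_toNat_eq {γ : OEdge m → ℤ} {ω : OPlaq m → ZMod 2}
    (hω : ω ∈ HTset m N γ) (y : C2plus m N → ℕ) (hy : ∀ p, (y p : ZMod 2) = ω p) :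
    ∃ n ∈ parityClass m N γ ω, ∀ p : C2plus m N, (n p).toNat = y p := by
  set n := oddExtension fun p => (y p : ℤ)
  have hn : IsCurrent m N n := ⟨(isTwoForm_oddExtension _).1, (isTwoForm_oddExtension _).2,
    fun p hp => by simp [n, oddExtension_of_mem _ hp]⟩
  have hmod : (fun p => (n p : ZMod 2)) = ω :=
    ((isTwoForm_oddExtension _).comp (Int.castAddHom (ZMod 2))).ext (isTwoForm_of_mem_HTset hω)
      fun p hp => by simp [oddExtension_of_mem _ hp, hy]
  exact ⟨n, ⟨mem_CurSet_iff.2 ⟨hn, hmod ▸ hω⟩, congrFun hmod⟩,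
    fun p => by simp [n, oddExtension_of_mem _ p.2]⟩

theorem hasSum_wgt_parityClass {β : ℝ} (hβ : 0 ≤ β) {γ : OEdge m → ℤ} {ω : OPlaq m → ZMod 2}
    (hω : ω ∈ HTset m N γ) :
    HasSum (fun n : ↥(parityClass m N γ ω) => wgt m N β n)
      (cosh (2 * β) ^ Nat.card (C2plus m N) * htWeight m N β ω) := by
  set g : C2plus m N → ℕ → ℝ := fun p k =>
    if (k : ZMod 2) = ω p then (2 * β) ^ k / k.factorial else 0
  have hg : HasSum (fun y : C2plus m N → ℕ => ∏ᶠ p, g p (y p))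
      (cosh (2 * β) ^ Nat.card (C2plus m N) * htWeight m N β ω) := by
    rw [htWeight, ← finprod_ite_cosh_sinh]
    refine hasSum_pi_finprod (fun p => hasSum_pow_div_factorial_parity _ _) fun p k => ?_
    simp only [g]
    split_ifs <;> positivity
  set j : ↥(parityClass m N γ ω) → C2plus m N → ℕ := fun n p => (n.1 p).toNat
  have hj : Function.Injective j := fun n n' h => Subtype.ext <|
    n.2.1.1.isTwoForm.ext n'.2.1.1.isTwoForm fun p hp => by
      have h' : (n.1 p).toNat = (n'.1 p).toNat := congrFun h ⟨p, hp⟩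
      rw [← n.2.1.1.toNat_eq hp, ← n'.2.1.1.toNat_eq hp, h']
  have hrange : ∀ y ∉ Set.range j, ∏ᶠ p, g p (y p) = 0 := by
    intro y hy
    by_contra h
    have hpar : ∀ p, (y p : ZMod 2) = ω p := fun p => by
      by_contra hp
      exact h (finprod_eq_zero _ p (if_neg hp) (Set.toFinite _))
    obtain ⟨n, hn, hny⟩ := exists_mem_parityClass_toNat_eq hω y hpar
    exact hy ⟨⟨n, hn⟩, funext hny⟩
  refine ((hj.hasSum_iff hrange).2 hg).congr_fun fun n => ?_
  rw [wgt_eq_finprod]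
  refine finprod_congr fun p => (if_pos ?_).symm
  rw [← Int.cast_natCast, n.2.1.1.toNat_eq p.2]
  exact n.2.2 p

theorem hasSum_wgt_CurSet {β : ℝ} (hβ : 0 ≤ β) (γ : OEdge m → ℤ) :
    HasSum (fun n : ↥(CurSet m N γ) => wgt m N β n)
      (cosh (2 * β) ^ Nat.card (C2plus m N) * ∑ᶠ ω ∈ HTset m N γ, htWeight m N β ω) := by
  have hfin := HTset_finite (m := m) (N := N) γ
  have hunion : CurSet m N γ = ⋃ ω ∈ hfin.toFinset, parityClass m N γ ω := by
    ext n
    simp only [Set.mem_iUnion, Set.Finite.mem_toFinset, Set.mem_inter_iff, exists_prop]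
    exact ⟨fun hn => ⟨_, (mem_CurSet_iff.1 hn).2, hn, fun p => rfl⟩, fun ⟨_, _, hn, _⟩ => hn⟩
  have hdisj : (hfin.toFinset : Set (OPlaq m → ZMod 2)).Pairwise
      (Function.onFun Disjoint (parityClass m N γ)) :=
    fun ω _ ω' _ hne => Set.disjoint_left.2 fun n hn hn' =>
      hne (funext fun p => (hn.2 p).symm.trans (hn'.2 p))
  rw [finsum_mem_eq_finite_toFinset_sum _ hfin, Finset.mul_sum, hunion]
  exact hasSum_sum_disjoint (f := wgt m N β) _ hdisj fun ω hω =>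
    hasSum_wgt_parityClass hβ (hfin.mem_toFinset.1 hω)
end Coupling

theorem coupling_a_general (m N : ℕ) (β : ℝ) (hβ : 0 < β) (γ : OEdge m → ℤ) :
    ∀ ω ∈ HTset m N γ,
      rcProb m N β γ {n | ∀ p, ((n p : ZMod 2)) = ω p} = htProb m N β γ ω := by
  intro ω hω
  rw [rcProb, htProb, (hasSum_wgt_parityClass hβ.le hω).tsum_eq,
    (hasSum_wgt_CurSet hβ.le γ).tsum_eq]
  exact mul_div_mul_left _ _ (pow_ne_zero _ (cosh_pos _).ne')

/-- **Coupling, part (a)**: the mod-2 reduction of the random current model is the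
high-temperature model. -/
theorem coupling_a (m N : ℕ) (hm : 3 ≤ m) (hN : 1 ≤ N) (β : ℝ) (hβ : 0 < β)
    (γ : OEdge m → ℤ) (hγ : LoopIn m N γ) (hne : (CurSet m N γ).Nonempty) :
    ∀ ω ∈ HTset m N γ,
      rcProb m N β γ {n | ∀ p, ((n p : ZMod 2)) = ω p} = htProb m N β γ ω :=
  coupling_a_general m N β hβ γ

end LGT
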